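/- arXiv:0711.0251 — 7 statements merged into one kernel-verified Lean document; each statement's English description precedes it below -/
import Mathlib

section
/- Let G be a DAG on n vertices with topological ordering ord, and let u, v be vertices with ord(v) < ord(u) such that there is no directed path from v to u in G. Let ord' be the canonical reordering for ord, u, v. Then ord' is a topological ordering of the graph G+(u,v): for every edge (a,b) of G one has ord'(a) < ord'(b), and also ord'(u) < ord'(v). -/
/-- Reachability: a directed path (possibly of length 0) from `x` to `y`. -/
def Reach {V : Type*} (E : V → V → Prop) : V → V → Prop :=
  Relation.ReflTransGen E

/-- A digraph is acyclic if it has no directed cycle. -/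
def Acyclic {V : Type*} (E : V → V → Prop) : Prop :=
  ∀ x, ¬ Relation.TransGen E x x

/-- `ord` is a topological ordering of the digraph `E`. -/
def IsTopOrd {V : Type*} {n : ℕ} (E : V → V → Prop) (ord : V ≃ Fin n) : Prop :=
  ∀ a b, E a b → ord a < ord b

/-- The graph `G + (u,v)`: the edge `(u,v)` is added to `E`. -/
def AddEdge {V : Type*} (E : V → V → Prop) (u v : V) : V → V → Prop :=
  fun a b => E a b ∨ (a = u ∧ b = v)

/-- `A = {x : ord v ≤ ord x ≤ ord u and x ⇝ u}`. -/
def AncS {V : Type*} {n : ℕ} (E : V → V → Prop) (ord : V ≃ Fin n) (u v : V) : Set V :=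
  {x | ord v ≤ ord x ∧ ord x ≤ ord u ∧ Reach E x u}

/-- `D = {x : ord v ≤ ord x ≤ ord u and v ⇝ x}`. -/
def DesS {V : Type*} {n : ℕ} (E : V → V → Prop) (ord : V ≃ Fin n) (u v : V) : Set V :=
  {x | ord v ≤ ord x ∧ ord x ≤ ord u ∧ Reach E v x}

/-- `ord'` is a canonical reordering for `ord, u, v`: conditions (a)-(d). -/
def IsCanonical {V : Type*} {n : ℕ} (E : V → V → Prop) (ord ord' : V ≃ Fin n)
    (u v : V) : Prop :=
  (∀ x, x ∉ AncS E ord u v ∪ DesS E ord u v → ord' x = ord x) ∧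
  (⇑ord' '' (AncS E ord u v ∪ DesS E ord u v) =
    ⇑ord '' (AncS E ord u v ∪ DesS E ord u v)) ∧
  (∀ x y, (x ∈ AncS E ord u v ∧ y ∈ AncS E ord u v) ∨
          (x ∈ DesS E ord u v ∧ y ∈ DesS E ord u v) →
      (ord' x < ord' y ↔ ord x < ord y)) ∧
  (∀ x ∈ AncS E ord u v, ∀ y ∈ DesS E ord u v, ord' x < ord' y)

/-!
Inside the window `A ∪ D` the reordering only permutes the positions, keeping the internal order
of `A` and of `D` and putting `A` first. Counting positions, every vertex of `A` moves down
(`ord' ≤ ord`), every vertex of `D` moves up (`ord ≤ ord'`), and all of `A ∪ D` stays within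
`[ord v, ord u]`. An edge leaving the window from `D` ends above `ord u`, an edge entering it in `A`
starts below `ord v`, and an edge from `D` to `A` would give a path `v ⇝ u`; so every edge stays
increasing, while `u ∈ A` and `v ∈ D` give `ord' u < ord' v`.
-/

section RankCount

variable {α β : Type*} [LinearOrder β]

-- Both sides of `g a ≤ f a` are positions in `g '' S = f '' S`, counted by the two subsets.
theorem le_of_image_eq_of_preimage_Iic_subset {f g : α → β} {S : Set α} (hS : S.Finite)
    (hf : S.InjOn f) (hg : S.InjOn g) (himg : f '' S = g '' S) {a : α} (ha : a ∈ S)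
    (hsub : S ∩ g ⁻¹' Set.Iic (g a) ⊆ S ∩ f ⁻¹' Set.Iic (f a)) : g a ≤ f a := by
  by_contra! hlt
  have hstrict : g '' S ∩ Set.Iic (f a) ⊂ g '' S ∩ Set.Iic (g a) :=
    Set.ssubset_iff_of_subset (Set.inter_subset_inter_right _ (Set.Iic_subset_Iic.2 hlt.le))
      |>.2 ⟨g a, ⟨Set.mem_image_of_mem g ha, le_rfl⟩, fun h => hlt.not_ge h.2⟩
  have hcount : (S ∩ g ⁻¹' Set.Iic (g a)).ncard ≤ (S ∩ f ⁻¹' Set.Iic (f a)).ncard :=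
    Set.ncard_le_ncard hsub (hS.inter_of_left _)
  rw [← (hg.mono Set.inter_subset_left).ncard_image, ← (hf.mono Set.inter_subset_left).ncard_image,
    Set.image_inter_preimage, Set.image_inter_preimage, himg] at hcount
  exact hcount.not_gt (Set.ncard_lt_ncard hstrict ((hS.image g).inter_of_left _))

theorem le_of_image_eq_of_preimage_Ici_subset {f g : α → β} {S : Set α} (hS : S.Finite)
    (hf : S.InjOn f) (hg : S.InjOn g) (himg : f '' S = g '' S) {a : α} (ha : a ∈ S)
    (hsub : S ∩ g ⁻¹' Set.Ici (g a) ⊆ S ∩ f ⁻¹' Set.Ici (f a)) : f a ≤ g a :=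
  le_of_image_eq_of_preimage_Iic_subset (β := βᵒᵈ) hS hf hg himg ha hsub

end RankCount

section Window

variable {V : Type*} {n : ℕ} {E : V → V → Prop} {ord : V ≃ Fin n} {u v a b : V}

theorem mem_ancS_of_edge (htop : IsTopOrd E ord) (hab : E a b) (hb : b ∈ AncS E ord u v)
    (ha : ord v ≤ ord a) : a ∈ AncS E ord u v :=
  ⟨ha, (htop a b hab).le.trans hb.2.1, Relation.ReflTransGen.head hab hb.2.2⟩

theorem mem_desS_of_edge (htop : IsTopOrd E ord) (hab : E a b) (ha : a ∈ DesS E ord u v)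
    (hb : ord b ≤ ord u) : b ∈ DesS E ord u v :=
  ⟨ha.1.trans (htop a b hab).le, hb, Relation.ReflTransGen.tail ha.2.2 hab⟩

end Window

namespace IsCanonical

variable {V : Type*} {n : ℕ} {E : V → V → Prop} {ord ord' : V ≃ Fin n} {u v a b : V}

theorem ord'_le_ord (hcan : IsCanonical E ord ord' u v) (ha : a ∈ AncS E ord u v) :
    ord' a ≤ ord a := by
  have : Finite V := .of_equiv _ ord.symm
  refine le_of_image_eq_of_preimage_Iic_subset (Set.toFinite _) ord.injective.injOn
    ord'.injective.injOn hcan.2.1.symm (Or.inl ha) ?_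
  rintro x ⟨hxS, hx⟩
  have hxA : x ∈ AncS E ord u v :=
    hxS.resolve_right fun hxD => (hcan.2.2.2 a ha x hxD).not_ge hx
  exact ⟨hxS, not_lt.1 fun h => ((hcan.2.2.1 a x (Or.inl ⟨ha, hxA⟩)).2 h).not_ge hx⟩

theorem ord_le_ord' (hcan : IsCanonical E ord ord' u v) (hb : b ∈ DesS E ord u v) :
    ord b ≤ ord' b := by
  have : Finite V := .of_equiv _ ord.symm
  refine le_of_image_eq_of_preimage_Ici_subset (Set.toFinite _) ord.injective.injOn
    ord'.injective.injOn hcan.2.1.symm (Or.inr hb) ?_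
  rintro x ⟨hxS, hx⟩
  have hxD : x ∈ DesS E ord u v :=
    hxS.resolve_left fun hxA => (hcan.2.2.2 x hxA b hb).not_ge hx
  exact ⟨hxS, not_lt.1 fun h => ((hcan.2.2.1 x b (Or.inr ⟨hxD, hb⟩)).2 h).not_ge hx⟩

theorem ord'_mem_Icc (hcan : IsCanonical E ord ord' u v)
    (ha : a ∈ AncS E ord u v ∪ DesS E ord u v) : ord' a ∈ Set.Icc (ord v) (ord u) := by
  obtain ⟨x, hx, hxa⟩ : ord' a ∈ ord '' (AncS E ord u v ∪ DesS E ord u v) :=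
    hcan.2.1 ▸ Set.mem_image_of_mem ord' ha
  rw [← hxa]
  rcases hx with hx | hx <;> exact ⟨hx.1, hx.2.1⟩

theorem lt_of_edge_of_mem (hcan : IsCanonical E ord ord' u v) (htop : IsTopOrd E ord)
    (hnr : ¬ Reach E v u) (hab : E a b) (ha : a ∈ AncS E ord u v ∪ DesS E ord u v) :
    ord' a < ord' b := by
  by_cases hb : b ∈ AncS E ord u v ∪ DesS E ord u v
  · rcases ha with ha | ha <;> rcases hb with hb | hb
    · exact (hcan.2.2.1 a b (Or.inl ⟨ha, hb⟩)).2 (htop a b hab)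
    · exact hcan.2.2.2 a ha b hb
    · exact absurd (ha.2.2.trans (.head hab hb.2.2)) hnr
    · exact (hcan.2.2.1 a b (Or.inr ⟨ha, hb⟩)).2 (htop a b hab)
  rw [hcan.1 b hb]
  rcases ha with ha | ha
  · exact (hcan.ord'_le_ord ha).trans_lt (htop a b hab)
  · have hub : ord u < ord b := not_le.1 fun h => hb (Or.inr (mem_desS_of_edge htop hab ha h))
    exact (hcan.ord'_mem_Icc (Or.inr ha)).2.trans_lt hub

theorem lt_of_edge_of_not_mem (hcan : IsCanonical E ord ord' u v) (htop : IsTopOrd E ord)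
    (hab : E a b) (ha : a ∉ AncS E ord u v ∪ DesS E ord u v) : ord' a < ord' b := by
  rw [hcan.1 a ha]
  by_cases hb : b ∈ AncS E ord u v ∪ DesS E ord u v
  · rcases hb with hb | hb
    · have hav : ord a < ord v := not_le.1 fun h => ha (Or.inl (mem_ancS_of_edge htop hab hb h))
      exact hav.trans_le (hcan.ord'_mem_Icc (Or.inl hb)).1
    · exact (htop a b hab).trans_le (hcan.ord_le_ord' hb)
  · exact hcan.1 b hb ▸ htop a b hab

end IsCanonical

theorem canonical_reordering_isTopOrd_general {V : Type*} {n : ℕ}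
    (E : V → V → Prop)
    (ord : V ≃ Fin n) (htop : IsTopOrd E ord)
    (u v : V) (huv : ord v < ord u) (hnr : ¬ Reach E v u)
    (ord' : V ≃ Fin n) (hcan : IsCanonical E ord ord' u v) :
    (∀ a b, E a b → ord' a < ord' b) ∧ ord' u < ord' v := by
  refine ⟨fun a b hab => ?_, hcan.2.2.2 u ⟨huv.le, le_rfl, .refl⟩ v ⟨le_rfl, huv.le, .refl⟩⟩
  by_cases ha : a ∈ AncS E ord u v ∪ DesS E ord u v
  · exact hcan.lt_of_edge_of_mem htop hnr hab ha
  · exact hcan.lt_of_edge_of_not_mem htop hab ha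

/-- the canonical reordering is a topological ordering of `G + (u,v)`. -/
theorem canonical_reordering_isTopOrd {V : Type*} [Fintype V] {n : ℕ}
    (E : V → V → Prop) (hacyc : Acyclic E)
    (ord : V ≃ Fin n) (htop : IsTopOrd E ord)
    (u v : V) (huv : ord v < ord u) (hnr : ¬ Reach E v u)
    (ord' : V ≃ Fin n) (hcan : IsCanonical E ord ord' u v) :
    (∀ a b, E a b → ord' a < ord' b) ∧ ord' u < ord' v :=
  canonical_reordering_isTopOrd_general E ord htop u v huv hnr ord' hcan
end

section
/- Let G be a DAG on n vertices with topological ordering ord, let u, v be vertices with i = ord(v) < ord(u) = j, and let t be an integer with i ≤ t ≤ j. If there is a directed path from v to u in G, then either the vertex w with ord(w) = t satisfies both v ⇝ w and w ⇝ u, or there exist vertices x, y such that v ⇝ x with i ≤ ord(x) ≤ t, y ⇝ u with t ≤ ord(y) ≤ j, and (x,y) is an edge of G. -/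
theorem Relation.ReflTransGen.exists_eq_or_exists_edge_across {V α : Type*} [LinearOrder α]
    {r : V → V → Prop} (f : V → α) {a b : V} (hab : Relation.ReflTransGen r a b) {t : α}
    (hat : f a ≤ t) (htb : t ≤ f b) :
    (∃ w, f w = t ∧ Relation.ReflTransGen r a w ∧ Relation.ReflTransGen r w b) ∨
    (∃ x y, Relation.ReflTransGen r a x ∧ f x < t ∧
      Relation.ReflTransGen r y b ∧ t < f y ∧ r x y) := by
  induction hab using Relation.ReflTransGen.head_induction_on with
  | refl => exact .inl ⟨b, le_antisymm hat htb, .refl, .refl⟩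
  | @head a c hac hcb ih =>
    rcases hat.eq_or_lt with hat | hat
    · exact .inl ⟨a, hat, .refl, .head hac hcb⟩
    rcases le_or_gt (f c) t with hct | hct
    · rcases ih hct with ⟨w, hw, hcw, hwb⟩ | ⟨x, y, hcx, hx, hyb, hy, hxy⟩
      · exact .inl ⟨w, hw, .head hac hcw, hwb⟩
      · exact .inr ⟨x, y, .head hac hcx, hx, hyb, hy, hxy⟩
    · exact .inr ⟨a, c, .refl, hat, hcb, hct, hac⟩

theorem IsTopOrd.le_of_reach {V : Type*} {n : ℕ} {E : V → V → Prop} {ord : V ≃ Fin n}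
    (htop : IsTopOrd E ord) {a b : V} (hab : Reach E a b) : ord a ≤ ord b := by
  induction hab with
  | refl => exact le_rfl
  | tail _ e ih => exact ih.trans (htop _ _ e).le

theorem cycle_witness_general {V : Type*} {n : ℕ}
    (E : V → V → Prop)
    (ord : V ≃ Fin n) (htop : IsTopOrd E ord)
    (u v : V)
    (t : ℕ) (ht1 : (ord v : ℕ) ≤ t) (ht2 : t ≤ (ord u : ℕ))
    (hpath : Reach E v u) :
    (∃ w, (ord w : ℕ) = t ∧ Reach E v w ∧ Reach E w u) ∨
    (∃ x y, Reach E v x ∧ (ord v : ℕ) ≤ (ord x : ℕ) ∧ (ord x : ℕ) ≤ t ∧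
        Reach E y u ∧ t ≤ (ord y : ℕ) ∧ (ord y : ℕ) ≤ (ord u : ℕ) ∧ E x y) := by
  rcases Relation.ReflTransGen.exists_eq_or_exists_edge_across (fun x ↦ (ord x : ℕ)) hpath ht1 ht2
    with ⟨w, hw, hvw, hwu⟩ | ⟨x, y, hvx, hx, hyu, hy, hxy⟩
  · exact .inl ⟨w, hw, hvw, hwu⟩
  · exact .inr ⟨x, y, hvx, htop.le_of_reach hvx, hx.le, hyu, hy.le, htop.le_of_reach hyu, hxy⟩

/-- if `v ⇝ u`, then either the vertex at position `t` is both a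
descendant of `v` and an ancestor of `u`, or some edge of `G` goes from a
descendant of `v` in positions `[i, t]` to an ancestor of `u` in positions `[t, j]`. -/
theorem cycle_witness {V : Type*} [Fintype V] {n : ℕ}
    (E : V → V → Prop) (hacyc : Acyclic E)
    (ord : V ≃ Fin n) (htop : IsTopOrd E ord)
    (u v : V) (huv : ord v < ord u)
    (t : ℕ) (ht1 : (ord v : ℕ) ≤ t) (ht2 : t ≤ (ord u : ℕ))
    (hpath : Reach E v u) :
    (∃ w, (ord w : ℕ) = t ∧ Reach E v w ∧ Reach E w u) ∨
    (∃ x y, Reach E v x ∧ (ord v : ℕ) ≤ (ord x : ℕ) ∧ (ord x : ℕ) ≤ t ∧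
        Reach E y u ∧ t ≤ (ord y : ℕ) ∧ (ord y : ℕ) ≤ (ord u : ℕ) ∧ E x y) :=
  cycle_witness_general E ord htop u v t ht1 ht2 hpath
end

section
/- Let G be a DAG on n vertices with topological ordering ord, and let u, v be vertices with i = ord(v) < ord(u) = j such that there is no directed path from v to u in G. Then there exists an integer t with i ≤ t ≤ j such that the number of descendants of v with ord-value in [i, t] equals the number of ancestors of u with ord-value in [t+1, j]; that is, |{y : i ≤ ord(y) ≤ t and v ⇝ y}| = |{w : t+1 ≤ ord(w) ≤ j and w ⇝ u}|. -/
theorem exists_eq_zero_of_le_add_one (f : ℕ → ℤ) {a b : ℕ} (hab : a ≤ b)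
    (ha : f a ≤ 0) (hb : 0 ≤ f b) (hstep : ∀ k, a ≤ k → k < b → f (k + 1) ≤ f k + 1) :
    ∃ t, a ≤ t ∧ t ≤ b ∧ f t = 0 := by
  induction b, hab using Nat.le_induction with
  | base => exact ⟨a, le_rfl, le_rfl, le_antisymm ha hb⟩
  | succ b hab ih =>
    by_cases hfb : 0 ≤ f b
    · obtain ⟨t, hat, htb, ht⟩ := ih hfb fun k hak hkb => hstep k hak (by omega)
      exact ⟨t, hat, by omega, ht⟩
    · have := hstep b hab (by omega)
      exact ⟨b + 1, by omega, le_rfl, by omega⟩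

section BalancedSplit

variable {V : Type*} [Finite V] {r : V → ℕ} {P Q : V → Prop}

theorem ncard_fiber_add_ncard_fiber_le_one (hr : Function.Injective r)
    (hPQ : ∀ x, P x → ¬ Q x) (m : ℕ) :
    {x | r x = m ∧ P x}.ncard + {x | r x = m ∧ Q x}.ncard ≤ 1 := by
  rw [← Set.ncard_union_eq (Set.disjoint_left.mpr fun x hP hQ => hPQ x hP.2 hQ.2),
    Set.ncard_le_one_iff]
  intro x y hx hy
  exact hr ((hx.elim And.left And.left).trans (hy.elim And.left And.left).symm)

theorem ncard_balance_step (hr : Function.Injective r) (hPQ : ∀ x, P x → ¬ Q x)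
    (a b k : ℕ) :
    {y | a ≤ r y ∧ r y ≤ k + 1 ∧ P y}.ncard + {w | k + 1 ≤ r w ∧ r w ≤ b ∧ Q w}.ncard ≤
      {y | a ≤ r y ∧ r y ≤ k ∧ P y}.ncard + {w | k + 1 + 1 ≤ r w ∧ r w ≤ b ∧ Q w}.ncard + 1 := by
  have hD : {y | a ≤ r y ∧ r y ≤ k + 1 ∧ P y} ⊆
      {y | a ≤ r y ∧ r y ≤ k ∧ P y} ∪ {x | r x = k + 1 ∧ P x} := by
    rintro y ⟨hay, hyk, hy⟩
    rcases hyk.lt_or_eq with hyk | hyk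
    exacts [Or.inl ⟨hay, by omega, hy⟩, Or.inr ⟨hyk, hy⟩]
  have hA : {w | k + 1 ≤ r w ∧ r w ≤ b ∧ Q w} ⊆
      {w | k + 1 + 1 ≤ r w ∧ r w ≤ b ∧ Q w} ∪ {x | r x = k + 1 ∧ Q x} := by
    rintro w ⟨hkw, hwb, hw⟩
    rcases hkw.lt_or_eq with hkw | hkw
    exacts [Or.inl ⟨hkw, hwb, hw⟩, Or.inr ⟨hkw.symm, hw⟩]
  have := (Set.ncard_le_ncard hD).trans (Set.ncard_union_le _ _)
  have := (Set.ncard_le_ncard hA).trans (Set.ncard_union_le _ _)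
  have := ncard_fiber_add_ncard_fiber_le_one hr hPQ (k + 1)
  omega

theorem exists_balanced_split (hr : Function.Injective r) (hPQ : ∀ x, P x → ¬ Q x)
    {u v : V} (hu : Q u) (hvu : r v < r u) :
    ∃ t, r v ≤ t ∧ t ≤ r u ∧
      {y | r v ≤ r y ∧ r y ≤ t ∧ P y}.ncard = {w | t + 1 ≤ r w ∧ r w ≤ r u ∧ Q w}.ncard := by
  set f : ℕ → ℤ := fun t =>
    {y | r v ≤ r y ∧ r y ≤ t ∧ P y}.ncard - {w | t + 1 ≤ r w ∧ r w ≤ r u ∧ Q w}.ncard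
  have hstart : f (r v) ≤ 0 := by
    have hD : {y | r v ≤ r y ∧ r y ≤ r v ∧ P y}.ncard ≤ 1 :=
      (Set.ncard_le_one_iff).mpr fun ⟨hvx, hxv, _⟩ ⟨hvy, hyv, _⟩ => hr (by omega)
    have hA : 0 < {w | r v + 1 ≤ r w ∧ r w ≤ r u ∧ Q w}.ncard :=
      (Set.ncard_pos).mpr ⟨u, hvu, le_rfl, hu⟩
    simp only [f]
    omega
  have hend : 0 ≤ f (r u) := by
    have hA : {w | r u + 1 ≤ r w ∧ r w ≤ r u ∧ Q w} = ∅ :=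
      Set.eq_empty_of_forall_notMem fun _ ⟨h, h', _⟩ => by omega
    simp only [f, hA, Set.ncard_empty]
    omega
  obtain ⟨t, hvt, htu, ht⟩ := exists_eq_zero_of_le_add_one f hvu.le hstart hend
    fun k _ _ => by
      have := ncard_balance_step hr hPQ (r v) (r u) k
      simp only [f]
      omega
  exact ⟨t, hvt, htu, by simpa only [f, sub_eq_zero, Nat.cast_inj] using ht⟩

end BalancedSplit

theorem balanced_split_exists_general {V : Type*} {n : ℕ}
    (E : V → V → Prop)
    (ord : V ≃ Fin n)
    (u v : V) (huv : ord v < ord u) (hnr : ¬ Reach E v u) :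
    ∃ t : ℕ, (ord v : ℕ) ≤ t ∧ t ≤ (ord u : ℕ) ∧
      {y : V | (ord v : ℕ) ≤ (ord y : ℕ) ∧ (ord y : ℕ) ≤ t ∧ Reach E v y}.ncard =
      {w : V | t + 1 ≤ (ord w : ℕ) ∧ (ord w : ℕ) ≤ (ord u : ℕ) ∧ Reach E w u}.ncard := by
  have : Finite V := .of_equiv _ ord.symm
  exact exists_balanced_split (P := Reach E v) (Q := (Reach E · u))
    (Fin.val_injective.comp ord.injective) (fun _ hvx hxu => hnr (hvx.trans hxu))
    .refl huv

/-- there is a position `t` with `i ≤ t ≤ j` balancing the number of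
descendants of `v` in `[i, t]` against the number of ancestors of `u` in `[t+1, j]`. -/
theorem balanced_split_exists {V : Type*} [Fintype V] {n : ℕ}
    (E : V → V → Prop) (hacyc : Acyclic E)
    (ord : V ≃ Fin n) (htop : IsTopOrd E ord)
    (u v : V) (huv : ord v < ord u) (hnr : ¬ Reach E v u) :
    ∃ t : ℕ, (ord v : ℕ) ≤ t ∧ t ≤ (ord u : ℕ) ∧
      {y : V | (ord v : ℕ) ≤ (ord y : ℕ) ∧ (ord y : ℕ) ≤ t ∧ Reach E v y}.ncard =
      {w : V | t + 1 ≤ (ord w : ℕ) ∧ (ord w : ℕ) ≤ (ord u : ℕ) ∧ Reach E w u}.ncard :=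
  balanced_split_exists_general E ord u v huv hnr
end

section
/- Let G be a DAG on n vertices with topological ordering ord, let u, v be vertices with ord(v) < ord(u) and no directed path from v to u in G, and let ord' be the canonical reordering for ord, u, v. Then the total leftward movement of the set A equals the total rightward movement of the set D: Σ_{x ∈ A} (ord(x) − ord'(x)) = Σ_{y ∈ D} (ord'(y) − ord(y)); consequently Σ_{x ∈ V} |ord(x) − ord'(x)| = 2 Σ_{x ∈ A} (ord(x) − ord'(x)). -/
/-!
A vertex in both `A` and `D` would give a path `v ⇝ u`, so `A` and `D` are disjoint, and `ord'`
only permutes the positions of `A ∪ D` among themselves; hence the displacements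
`ord x - ord' x` sum to zero over `A ∪ D`, which is the first identity. For the second, every
vertex of `A` moves left: its `ord'`-predecessors in `A ∪ D` all lie in `A`, where `ord'` keeps
the order of `ord`, so its rank among the shared positions cannot grow. Dually every vertex of `D`
moves right, so `|ord x - ord' x|` is the signed displacement on `A` and on `D`, and it vanishes
outside `A ∪ D`.
-/

theorem le_of_image_eq_of_forall_le_imp_le {α β : Type*} [LinearOrder β] {s : Set α}
    {f g : α → β} (hs : s.Finite) (hf : s.InjOn f) (hg : s.InjOn g) (himg : f '' s = g '' s)
    {x : α} (hx : x ∈ s) (hle : ∀ y ∈ s, g y ≤ g x → f y ≤ f x) : g x ≤ f x := by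
  by_contra! hlt
  set L := {y ∈ s | g y ≤ g x}
  have hLs : L ⊆ s := Set.sep_subset _ _
  have hfin (c : β) : {p ∈ g '' s | p ≤ c}.Finite := (hs.image g).subset (Set.sep_subset _ _)
  have hfL : f '' L ⊆ {p ∈ g '' s | p ≤ f x} := by
    rintro _ ⟨y, hy, rfl⟩
    exact Set.mem_sep (himg ▸ Set.mem_image_of_mem f hy.1) (hle y hy.1 hy.2)
  have hgap : {p ∈ g '' s | p ≤ f x} ⊂ {p ∈ g '' s | p ≤ g x} :=
    (Set.ssubset_iff_of_subset fun _ hp => Set.mem_sep hp.1 (hp.2.trans hlt.le)).2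
      ⟨g x, ⟨Set.mem_image_of_mem g hx, le_rfl⟩, fun h => hlt.not_ge h.2⟩
  have hgL : {p ∈ g '' s | p ≤ g x} ⊆ g '' L := by
    rintro _ ⟨⟨y, hy, rfl⟩, hyx⟩
    exact ⟨y, ⟨hy, hyx⟩, rfl⟩
  refine lt_irrefl L.ncard ?_
  calc L.ncard = (f '' L).ncard := ((hf.mono hLs).ncard_image).symm
    _ ≤ {p ∈ g '' s | p ≤ f x}.ncard := Set.ncard_le_ncard hfL (hfin _)
    _ < {p ∈ g '' s | p ≤ g x}.ncard := Set.ncard_lt_ncard hgap (hfin _)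
    _ ≤ (g '' L).ncard := Set.ncard_le_ncard hgL ((hs.subset hLs).image g)
    _ = L.ncard := (hg.mono hLs).ncard_image

section CanonicalReordering

variable {V : Type*} {n : ℕ} {E : V → V → Prop} {ord ord' : V ≃ Fin n} {u v : V}

theorem disjoint_ancS_desS (hnr : ¬ Reach E v u) :
    Disjoint (AncS E ord u v) (DesS E ord u v) :=
  Set.disjoint_left.2 fun _ hA hD => hnr (Relation.ReflTransGen.trans hD.2.2 hA.2.2)

namespace IsCanonical

theorem le_of_mem_ancS (hcan : IsCanonical E ord ord' u v) {x : V} (hx : x ∈ AncS E ord u v) :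
    ord' x ≤ ord x := by
  obtain ⟨-, himg, hmono, hsep⟩ := hcan
  have : Finite V := .of_equiv _ ord.symm
  refine le_of_image_eq_of_forall_le_imp_le (Set.toFinite _) ord.injective.injOn
    ord'.injective.injOn himg.symm (Set.mem_union_left _ hx) ?_
  rintro y (hy | hy) hyx
  · exact not_lt.1 fun h => not_lt.2 hyx ((hmono x y (.inl ⟨hx, hy⟩)).2 h)
  · exact absurd hyx (hsep x hx y hy).not_ge

theorem le_of_mem_desS (hcan : IsCanonical E ord ord' u v) {x : V} (hx : x ∈ DesS E ord u v) :
    ord x ≤ ord' x := by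
  obtain ⟨-, himg, hmono, hsep⟩ := hcan
  have : Finite V := .of_equiv _ ord.symm
  refine le_of_image_eq_of_forall_le_imp_le (β := (Fin n)ᵒᵈ) (f := fun y => .toDual (ord y))
    (g := fun y => .toDual (ord' y)) (s := AncS E ord u v ∪ DesS E ord u v) (Set.toFinite _)
    ord.injective.injOn ord'.injective.injOn ?_ (Set.mem_union_right _ hx) ?_
  · rw [← Set.image_image, ← himg, Set.image_image]
  rintro y (hy | hy) hxy
  · exact absurd hxy (hsep y hy x hx).not_ge
  · exact not_lt.1 fun h => not_lt.2 hxy ((hmono y x (.inr ⟨hy, hx⟩)).2 h)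

theorem finsum_mem_sub_eq_zero (hcan : IsCanonical E ord ord' u v) :
    ∑ᶠ x ∈ AncS E ord u v ∪ DesS E ord u v,
      (((ord x : ℕ) : ℤ) - ((ord' x : ℕ) : ℤ)) = 0 := by
  have : Finite V := .of_equiv _ ord.symm
  have hpos (σ : V ≃ Fin n) :
      ∑ᶠ x ∈ AncS E ord u v ∪ DesS E ord u v, ((σ x : ℕ) : ℤ) =
        ∑ᶠ p ∈ σ '' (AncS E ord u v ∪ DesS E ord u v), ((p : ℕ) : ℤ) :=
    (finsum_mem_image (f := fun p : Fin n => ((p : ℕ) : ℤ)) σ.injective.injOn).symm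
  rw [finsum_mem_sub_distrib _ _ (Set.toFinite _), hpos ord, hpos ord', hcan.2.1, sub_self]

theorem finsum_mem_ancS_eq (hcan : IsCanonical E ord ord' u v) (hnr : ¬ Reach E v u) :
    ∑ᶠ x ∈ AncS E ord u v, (((ord x : ℕ) : ℤ) - ((ord' x : ℕ) : ℤ)) =
      ∑ᶠ y ∈ DesS E ord u v, (((ord' y : ℕ) : ℤ) - ((ord y : ℕ) : ℤ)) := by
  have : Finite V := .of_equiv _ ord.symm
  have hsum := hcan.finsum_mem_sub_eq_zero
  rw [finsum_mem_union (disjoint_ancS_desS hnr) (Set.toFinite _) (Set.toFinite _)] at hsum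
  simp only [← neg_sub ((ord _ : ℕ) : ℤ), finsum_mem_neg_distrib _ (Set.toFinite _)]
  exact eq_neg_of_add_eq_zero_left hsum

theorem sum_abs_sub_eq [Fintype V] (hcan : IsCanonical E ord ord' u v)
    (hnr : ¬ Reach E v u) :
    ∑ x : V, |((ord x : ℕ) : ℤ) - ((ord' x : ℕ) : ℤ)| =
      ∑ᶠ x ∈ AncS E ord u v, (((ord x : ℕ) : ℤ) - ((ord' x : ℕ) : ℤ)) +
        ∑ᶠ y ∈ DesS E ord u v, (((ord' y : ℕ) : ℤ) - ((ord y : ℕ) : ℤ)) := by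
  have hfix : ∀ x ∉ AncS E ord u v ∪ DesS E ord u v,
      |((ord x : ℕ) : ℤ) - ((ord' x : ℕ) : ℤ)| = 0 := fun x hx => by
    rw [hcan.1 x hx, sub_self, abs_zero]
  rw [← finsum_eq_sum_of_fintype, ← finsum_mem_univ,
    finsum_mem_inter_support_eq' _ Set.univ (AncS E ord u v ∪ DesS E ord u v)
      fun x hx => iff_of_true trivial (by_contra fun h => hx (hfix x h)),
    finsum_mem_union (disjoint_ancS_desS hnr) (Set.toFinite _) (Set.toFinite _)]
  congr 1 <;> refine finsum_mem_congr rfl fun x hx => ?_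
  · exact abs_of_nonneg (sub_nonneg.2 (by exact_mod_cast hcan.le_of_mem_ancS hx))
  · rw [abs_of_nonpos (sub_nonpos.2 (by exact_mod_cast hcan.le_of_mem_desS hx)), neg_sub]

end IsCanonical

end CanonicalReordering

theorem canonical_reordering_total_movement_general {V : Type*} [Fintype V] {n : ℕ}
    (E : V → V → Prop)
    (ord : V ≃ Fin n)
    (u v : V) (hnr : ¬ Reach E v u)
    (ord' : V ≃ Fin n) (hcan : IsCanonical E ord ord' u v) :
    (∑ᶠ x ∈ AncS E ord u v, (((ord x : ℕ) : ℤ) - ((ord' x : ℕ) : ℤ))) =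
      (∑ᶠ y ∈ DesS E ord u v, (((ord' y : ℕ) : ℤ) - ((ord y : ℕ) : ℤ))) ∧
    (∑ x : V, |((ord x : ℕ) : ℤ) - ((ord' x : ℕ) : ℤ)|) =
      2 * ∑ᶠ x ∈ AncS E ord u v, (((ord x : ℕ) : ℤ) - ((ord' x : ℕ) : ℤ)) := by
  have hmove := hcan.finsum_mem_ancS_eq hnr
  exact ⟨hmove, by rw [hcan.sum_abs_sub_eq hnr, ← hmove, two_mul]⟩

/-- the total leftward movement of `A` equals the total rightward
movement of `D`, and the total movement is twice the movement of `A`. -/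
theorem canonical_reordering_total_movement {V : Type*} [Fintype V] {n : ℕ}
    (E : V → V → Prop) (hacyc : Acyclic E)
    (ord : V ≃ Fin n) (htop : IsTopOrd E ord)
    (u v : V) (huv : ord v < ord u) (hnr : ¬ Reach E v u)
    (ord' : V ≃ Fin n) (hcan : IsCanonical E ord ord' u v) :
    (∑ᶠ x ∈ AncS E ord u v, (((ord x : ℕ) : ℤ) - ((ord' x : ℕ) : ℤ))) =
      (∑ᶠ y ∈ DesS E ord u v, (((ord' y : ℕ) : ℤ) - ((ord y : ℕ) : ℤ))) ∧
    (∑ x : V, |((ord x : ℕ) : ℤ) - ((ord' x : ℕ) : ℤ)|) =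
      2 * ∑ᶠ x ∈ AncS E ord u v, (((ord x : ℕ) : ℤ) - ((ord' x : ℕ) : ℤ)) :=
  canonical_reordering_total_movement_general E ord u v hnr ord' hcan
end

section
/- Let G be a DAG with topological ordering ord, and let u, v be vertices with ord(v) < ord(u) and no directed path from v to u in G. Suppose a ⇝ u and v ⇝ d in G, and ord(d) ≤ ord(a). Then a and d are incomparable in G (neither a ⇝ d nor d ⇝ a holds in G), but in G+(u,v) the relation a ⇝ d holds; i.e., the ordered pair (a,d) becomes comparable for the first time upon insertion of the edge (u,v). -/
/-!
A path from `a` to `d` would have to be trivial since `ord d ≤ ord a`, giving `v ⇝ a ⇝ u`;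
a path from `d` to `a` would give `v ⇝ d ⇝ a ⇝ u`. In `G + (u,v)` there is the path `a ⇝ u → v ⇝ d`.
-/

theorem IsTopOrd.ord_le_of_reach {V : Type*} {n : ℕ} {E : V → V → Prop} {ord : V ≃ Fin n}
    (htop : IsTopOrd E ord) {x y : V} (h : Reach E x y) : ord x ≤ ord y := by
  induction h with
  | refl => exact le_rfl
  | tail _ hstep ih => exact ih.trans (htop _ _ hstep).le

theorem IsTopOrd.eq_of_reach_of_ord_le {V : Type*} {n : ℕ} {E : V → V → Prop}
    {ord : V ≃ Fin n} (htop : IsTopOrd E ord) {x y : V} (h : Reach E x y)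
    (hle : ord y ≤ ord x) : x = y :=
  ord.injective ((htop.ord_le_of_reach h).antisymm hle)

theorem Reach.addEdge {V : Type*} {E : V → V → Prop} {x y : V} (u v : V) (h : Reach E x y) :
    Reach (AddEdge E u v) x y :=
  Relation.ReflTransGen.mono (fun _ _ => Or.inl) _ _ h

theorem reach_addEdge_of_reach_of_reach {V : Type*} {E : V → V → Prop} {u v a d : V}
    (ha : Reach E a u) (hd : Reach E v d) : Reach (AddEdge E u v) a d :=
  (ha.addEdge u v).trans <|
    (Relation.ReflTransGen.single (show AddEdge E u v u v from Or.inr ⟨rfl, rfl⟩)).trans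
      (hd.addEdge u v)

theorem newly_comparable_pair_general {V : Type*} {n : ℕ}
    (E : V → V → Prop)
    (ord : V ≃ Fin n) (htop : IsTopOrd E ord)
    (u v : V) (hnr : ¬ Reach E v u)
    (a d : V) (ha : Reach E a u) (hd : Reach E v d) (hord : ord d ≤ ord a) :
    (¬ Reach E a d ∧ ¬ Reach E d a) ∧ Reach (AddEdge E u v) a d := by
  refine ⟨⟨fun had => ?_, fun hda => hnr (hd.trans (hda.trans ha))⟩,
    reach_addEdge_of_reach_of_reach ha hd⟩
  obtain rfl := htop.eq_of_reach_of_ord_le had hord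
  exact hnr (hd.trans ha)

/-- an ancestor `a` of `u` and a descendant `d` of `v` with
`ord d ≤ ord a` are incomparable in `G`, but become comparable (`a ⇝ d`) in
`G + (u,v)`. -/
theorem newly_comparable_pair {V : Type*} [Fintype V] {n : ℕ}
    (E : V → V → Prop) (hacyc : Acyclic E)
    (ord : V ≃ Fin n) (htop : IsTopOrd E ord)
    (u v : V) (huv : ord v < ord u) (hnr : ¬ Reach E v u)
    (a d : V) (ha : Reach E a u) (hd : Reach E v d) (hord : ord d ≤ ord a) :
    (¬ Reach E a d ∧ ¬ Reach E d a) ∧ Reach (AddEdge E u v) a d :=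
  newly_comparable_pair_general E ord htop u v hnr a d ha hd hord
end

section
/- Let G_0 ⊆ G_1 ⊆ ⋯ ⊆ G_m be an increasing chain of digraphs on a common finite vertex set V, each acyclic, and let E be the edge set of G_m with |E| = m'. For edges e = (a,b) and e' = (c,d) in E, say e leads to e' in G_k if both e and e' are edges of G_k and b ⇝ c in G_k. Then Σ_{k=1}^{m} |{(e,e') ∈ E×E : e ≠ e', e leads to e' in G_k but not in G_{k−1}}| ≤ m'(m'−1)/2. -/
/-- `e` leads to `e'` in the digraph `H`: both are edges of `H` and the head of
`e` reaches the tail of `e'` in `H`. -/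
def LeadsTo {V : Type*} (H : V → V → Prop) (e e' : V × V) : Prop :=
  H e.1 e.2 ∧ H e'.1 e'.2 ∧ Reach H e.2 e'.1

theorem Set.ncard_offDiag {α : Type*} {S : Set α} (hS : S.Finite) :
    S.offDiag.ncard = S.ncard * S.ncard - S.ncard := by
  rw [← hS.coe_toFinset, ← Finset.coe_offDiag, Set.ncard_coe_finset, Set.ncard_coe_finset,
    Finset.offDiag_card]

theorem Set.ncard_setOf_asymm_le {α : Type*} {S : Set α} (hS : S.Finite) (R : α → α → Prop)
    (hR : ∀ a b, R a b → ¬ R b a) :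
    {q : α × α | q.1 ∈ S ∧ q.2 ∈ S ∧ R q.1 q.2}.ncard ≤ S.ncard * (S.ncard - 1) / 2 := by
  set T := {q : α × α | q.1 ∈ S ∧ q.2 ∈ S ∧ R q.1 q.2}
  have hT : T.Finite := (hS.prod hS).subset fun q hq => ⟨hq.1, hq.2.1⟩
  have hdisj : Disjoint T (Prod.swap '' T) := by
    rw [Set.disjoint_left]
    rintro q hq ⟨p, hp, rfl⟩
    exact hR _ _ hp.2.2 hq.2.2
  have hsub : T ∪ Prod.swap '' T ⊆ S.offDiag := by
    rintro _ (hq | ⟨q, hq, rfl⟩)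
    · exact ⟨hq.1, hq.2.1, fun h => hR _ _ hq.2.2 (h ▸ hq.2.2)⟩
    · exact ⟨hq.2.1, hq.1, fun h : q.2 = q.1 => hR _ _ hq.2.2 (h ▸ hq.2.2)⟩
  have hcard : T.ncard + T.ncard ≤ S.ncard * S.ncard - S.ncard := by
    calc T.ncard + T.ncard = (T ∪ Prod.swap '' T).ncard := by
          rw [Set.ncard_union_eq hdisj hT (hT.image _),
            Set.ncard_image_of_injective _ Prod.swap_injective]
      _ ≤ S.offDiag.ncard := Set.ncard_le_ncard hsub hS.offDiag
      _ = S.ncard * S.ncard - S.ncard := Set.ncard_offDiag hS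
  rw [Nat.le_div_iff_mul_le two_pos, Nat.mul_sub_one]
  omega

theorem Set.sum_ncard_sdiff_pred_le {α : Type*} [Finite α] (P : ℕ → Set α) (m : ℕ)
    (hP : ∀ k, 1 ≤ k → k ≤ m → P (k - 1) ⊆ P k) :
    ∑ k ∈ Finset.Icc 1 m, (P k \ P (k - 1)).ncard ≤ (P m).ncard := by
  induction m with
  | zero => simp
  | succ m ih =>
    rw [Finset.sum_Icc_succ_top (by omega),
      ← Set.ncard_sdiff_add_ncard_of_subset (hP (m + 1) (by omega) le_rfl), add_comm]
    exact Nat.add_le_add_left (ih fun k hk hkm => hP k hk (by omega)) _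

theorem LeadsTo.mono {V : Type*} {H H' : V → V → Prop} (h : H ≤ H')
    {e e' : V × V} (he : LeadsTo H e e') : LeadsTo H' e e' :=
  ⟨h _ _ he.1, h _ _ he.2.1, Relation.ReflTransGen.mono h _ _ he.2.2⟩

theorem LeadsTo.not_symm {V : Type*} {H : V → V → Prop} (hH : Acyclic H) {e e' : V × V}
    (he : LeadsTo H e e') : ¬ LeadsTo H e' e := fun he' =>
  hH e.1 <| Relation.TransGen.trans_right ((Relation.ReflTransGen.single he.1).trans he.2.2)
    (Relation.TransGen.head' he'.1 he'.2.2)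

/-- over an increasing chain of DAGs, the total number of ordered
pairs of distinct edges of the final graph that newly "lead to" each other is at
most `m'(m'-1)/2` where `m'` is the number of edges of the final graph. -/
theorem total_newly_related_edge_pairs {V : Type*} [Fintype V] {m m' : ℕ}
    (G : ℕ → V → V → Prop)
    (hmono : ∀ k, 1 ≤ k → k ≤ m → ∀ x y, G (k - 1) x y → G k x y)
    (hacyc : ∀ k ≤ m, Acyclic (G k))
    (hE : {p : V × V | G m p.1 p.2}.ncard = m') :
    ∑ k ∈ Finset.Icc 1 m,
        {q : (V × V) × (V × V) | G m q.1.1 q.1.2 ∧ G m q.2.1 q.2.2 ∧ q.1 ≠ q.2 ∧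
          LeadsTo (G k) q.1 q.2 ∧ ¬ LeadsTo (G (k - 1)) q.1 q.2}.ncard ≤
      m' * (m' - 1) / 2 := by
  set P : ℕ → Set ((V × V) × (V × V)) := fun k =>
    {q | G m q.1.1 q.1.2 ∧ G m q.2.1 q.2.2 ∧ q.1 ≠ q.2 ∧ LeadsTo (G k) q.1 q.2}
  have hP : ∀ k, 1 ≤ k → k ≤ m → P (k - 1) ⊆ P k := fun k hk hkm q hq =>
    ⟨hq.1, hq.2.1, hq.2.2.1, hq.2.2.2.mono (hmono k hk hkm)⟩
  calc _ = ∑ k ∈ Finset.Icc 1 m, (P k \ P (k - 1)).ncard := by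
        refine Finset.sum_congr rfl fun k _ => congrArg Set.ncard (Set.ext fun q => ?_)
        simp only [P, Set.mem_sdiff, Set.mem_ofPred_eq]
        tauto
    _ ≤ (P m).ncard := Set.sum_ncard_sdiff_pred_le P m hP
    _ ≤ {q : (V × V) × (V × V) | q.1 ∈ {p : V × V | G m p.1 p.2} ∧
          q.2 ∈ {p : V × V | G m p.1 p.2} ∧ LeadsTo (G m) q.1 q.2}.ncard :=
        Set.ncard_le_ncard fun q hq => ⟨hq.1, hq.2.1, hq.2.2.2⟩
    _ ≤ m' * (m' - 1) / 2 :=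
        hE ▸ Set.ncard_setOf_asymm_le (Set.toFinite _) _
          fun _ _ => LeadsTo.not_symm (hacyc m le_rfl)
end

section
/- Let n ≥ 1 and let X : {1,…,n} × {1,…,n} → ℝ satisfy: (i) X(i,j) = 0 whenever j ≤ i; (ii) 0 ≤ X(i,j) ≤ n for all i, j; and (iii) for every i, Σ_{j > i} X(i,j) − Σ_{j < i} X(j,i) ≤ n. Then Σ_{i=1}^{n} Σ_{j=1}^{n} X(i,j) ≤ 4·n^{5/2}. -/
open Finset

noncomputable def netOutflow (n : ℕ) (X : ℕ → ℕ → ℝ) (i : ℕ) : ℝ :=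
  (∑ j ∈ (Icc 1 n).filter (fun j => i < j), X i j) -
    ∑ j ∈ (Icc 1 n).filter (fun j => j < i), X j i

noncomputable def cutWeight (n : ℕ) (X : ℕ → ℕ → ℝ) (k : ℕ) : ℝ :=
  ∑ i ∈ Icc 1 n, ∑ j ∈ Icc 1 n, if i ≤ k ∧ k < j then X i j else 0

section

variable {n : ℕ} {X : ℕ → ℕ → ℝ}

theorem cutWeight_eq_sum_netOutflow (k : ℕ) :
    cutWeight n X k = ∑ i ∈ (Icc 1 n).filter (· ≤ k), netOutflow n X i := by
  have hout : ∑ i ∈ (Icc 1 n).filter (· ≤ k), ∑ j ∈ (Icc 1 n).filter (fun j => i < j), X i j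
      = ∑ i ∈ Icc 1 n, ∑ j ∈ Icc 1 n, if i ≤ k ∧ i < j then X i j else 0 := by
    rw [sum_filter]
    refine sum_congr rfl fun i _ => ?_
    rw [sum_filter]
    split_ifs with hik <;> simp [hik]
  have hin : ∑ i ∈ (Icc 1 n).filter (· ≤ k), ∑ j ∈ (Icc 1 n).filter (fun j => j < i), X j i
      = ∑ i ∈ Icc 1 n, ∑ j ∈ Icc 1 n, if j ≤ k ∧ i < j then X i j else 0 := by
    rw [sum_filter, sum_comm]
    refine sum_congr rfl fun i _ => ?_
    rw [sum_filter]
    split_ifs with hik <;> simp [hik]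
  simp only [cutWeight, netOutflow]
  rw [sum_sub_distrib, hout, hin, ← sum_sub_distrib]
  refine sum_congr rfl fun i _ => ?_
  rw [← sum_sub_distrib]
  refine sum_congr rfl fun j _ => ?_
  split_ifs <;> first | (exfalso; omega) | ring

theorem cutWeight_le {b : ℝ} (hb : 0 ≤ b) (hbal : ∀ i ∈ Icc 1 n, netOutflow n X i ≤ b)
    (k : ℕ) : cutWeight n X k ≤ n * b := by
  rw [cutWeight_eq_sum_netOutflow]
  calc ∑ i ∈ (Icc 1 n).filter (· ≤ k), netOutflow n X i
      ≤ ((Icc 1 n).filter (· ≤ k)).card • b :=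
        sum_le_card_nsmul _ _ _ fun i hi => hbal i (mem_filter.mp hi).1
    _ ≤ n * b := by
        rw [nsmul_eq_mul]
        gcongr
        exact_mod_cast (card_filter_le _ _).trans (Nat.card_Icc 1 n).le

/-- The truncated `j - i` is deliberate: it vanishes for `j ≤ i`, where no cut is crossed. -/
theorem sum_sub_mul_eq_sum_cutWeight :
    ∑ i ∈ Icc 1 n, ∑ j ∈ Icc 1 n, ((j - i : ℕ) : ℝ) * X i j =
      ∑ k ∈ Icc 1 n, cutWeight n X k := by
  simp only [cutWeight]
  symm
  rw [sum_comm]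
  refine sum_congr rfl fun i hi => ?_
  rw [sum_comm]
  refine sum_congr rfl fun j hj => ?_
  have hcut : (Icc 1 n).filter (fun k => i ≤ k ∧ k < j) = Ico i j := by
    ext k
    simp only [mem_filter, mem_Icc, mem_Ico] at hi hj ⊢
    omega
  rw [← sum_filter, hcut, sum_const, Nat.card_Ico, nsmul_eq_mul]

theorem sum_sub_mul_le {b : ℝ} (hb : 0 ≤ b) (hbal : ∀ i ∈ Icc 1 n, netOutflow n X i ≤ b) :
    ∑ i ∈ Icc 1 n, ∑ j ∈ Icc 1 n, ((j - i : ℕ) : ℝ) * X i j ≤ n * (n * b) := by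
  rw [sum_sub_mul_eq_sum_cutWeight]
  calc ∑ k ∈ Icc 1 n, cutWeight n X k ≤ (Icc 1 n).card • (n * b) :=
        sum_le_card_nsmul _ _ _ fun k _ => cutWeight_le hb hbal k
    _ = n * (n * b) := by rw [Nat.card_Icc, nsmul_eq_mul, Nat.add_sub_cancel]

end

theorem le_ite_add_mul_div {x c w t : ℝ} (hx : 0 ≤ x) (hxc : x ≤ c) (hw : 0 ≤ w) (ht : 0 < t) :
    x ≤ (if w ≤ t then c else 0) + w * x / t := by
  split_ifs with hwt
  · have : 0 ≤ w * x / t := by positivity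
    linarith
  · rw [zero_add, le_div_iff₀ ht]
    nlinarith

theorem card_filter_lt_sub_le_floor (s : Finset ℕ) (i : ℕ) {t : ℝ} :
    (s.filter (fun j => i < j ∧ ((j - i : ℕ) : ℝ) ≤ t)).card ≤ ⌊t⌋₊ := by
  calc _ ≤ (Ioc i (i + ⌊t⌋₊)).card := by
        refine card_le_card fun j hj => ?_
        obtain ⟨-, hij, hjt⟩ := mem_filter.mp hj
        have := Nat.le_floor hjt
        rw [mem_Ioc]
        omega
    _ = ⌊t⌋₊ := by rw [Nat.card_Ioc, Nat.add_sub_cancel_left]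

theorem sum_row_le {s : Finset ℕ} {X : ℕ → ℕ → ℝ} {i : ℕ} {c t : ℝ} (hc : 0 ≤ c) (ht : 0 < t)
    (hzero : ∀ j ∈ s, j ≤ i → X i j = 0) (hrange : ∀ j ∈ s, 0 ≤ X i j ∧ X i j ≤ c) :
    ∑ j ∈ s, X i j ≤ t * c + (∑ j ∈ s, ((j - i : ℕ) : ℝ) * X i j) / t := by
  have hpoint : ∀ j ∈ s, X i j ≤
      (if i < j ∧ ((j - i : ℕ) : ℝ) ≤ t then c else 0) + ((j - i : ℕ) : ℝ) * X i j / t := by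
    intro j hj
    by_cases hij : i < j
    · simpa only [hij, true_and] using
        le_ite_add_mul_div (hrange j hj).1 (hrange j hj).2 (Nat.cast_nonneg _) ht
    · simp [hzero j hj (not_lt.mp hij), hij]
  have hshort : ((s.filter (fun j => i < j ∧ ((j - i : ℕ) : ℝ) ≤ t)).card : ℝ) ≤ t :=
    (Nat.cast_le.mpr (card_filter_lt_sub_le_floor s i)).trans (Nat.floor_le ht.le)
  calc ∑ j ∈ s, X i j
      ≤ ∑ j ∈ s, ((if i < j ∧ ((j - i : ℕ) : ℝ) ≤ t then c else 0) +
          ((j - i : ℕ) : ℝ) * X i j / t) := sum_le_sum hpoint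
    _ = (s.filter (fun j => i < j ∧ ((j - i : ℕ) : ℝ) ≤ t)).card * c +
          (∑ j ∈ s, ((j - i : ℕ) : ℝ) * X i j) / t := by
        rw [sum_add_distrib, sum_ite, sum_const_zero, add_zero, sum_const, nsmul_eq_mul, sum_div]
    _ ≤ t * c + (∑ j ∈ s, ((j - i : ℕ) : ℝ) * X i j) / t := by gcongr

theorem sum_le_of_netOutflow_le {n : ℕ} {X : ℕ → ℕ → ℝ} {b c t : ℝ} (hb : 0 ≤ b) (hc : 0 ≤ c)
    (ht : 0 < t) (hzero : ∀ i ∈ Icc 1 n, ∀ j ∈ Icc 1 n, j ≤ i → X i j = 0)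
    (hrange : ∀ i ∈ Icc 1 n, ∀ j ∈ Icc 1 n, 0 ≤ X i j ∧ X i j ≤ c)
    (hbal : ∀ i ∈ Icc 1 n, netOutflow n X i ≤ b) :
    ∑ i ∈ Icc 1 n, ∑ j ∈ Icc 1 n, X i j ≤ n * (t * c) + n * (n * b) / t := by
  calc ∑ i ∈ Icc 1 n, ∑ j ∈ Icc 1 n, X i j
      ≤ ∑ i ∈ Icc 1 n, (t * c + (∑ j ∈ Icc 1 n, ((j - i : ℕ) : ℝ) * X i j) / t) :=
        sum_le_sum fun i hi => sum_row_le hc ht (hzero i hi) (hrange i hi)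
    _ = n * (t * c) + (∑ i ∈ Icc 1 n, ∑ j ∈ Icc 1 n, ((j - i : ℕ) : ℝ) * X i j) / t := by
        rw [sum_add_distrib, sum_const, Nat.card_Icc, Nat.add_sub_cancel, nsmul_eq_mul, sum_div]
    _ ≤ n * (t * c) + n * (n * b) / t := by
        gcongr
        exact sum_sub_mul_le hb hbal

/-- the linear-programming bound: any `X` satisfying constraints
(i)-(iii) has total sum at most `4 n^{5/2} = 4 n² √n`. -/
theorem lp_bound (n : ℕ) (hn : 1 ≤ n) (X : ℕ → ℕ → ℝ)
    (hzero : ∀ i ∈ Finset.Icc 1 n, ∀ j ∈ Finset.Icc 1 n, j ≤ i → X i j = 0)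
    (hrange : ∀ i ∈ Finset.Icc 1 n, ∀ j ∈ Finset.Icc 1 n,
      0 ≤ X i j ∧ X i j ≤ (n : ℝ))
    (hbal : ∀ i ∈ Finset.Icc 1 n,
      (∑ j ∈ (Finset.Icc 1 n).filter (fun j => i < j), X i j) -
        (∑ j ∈ (Finset.Icc 1 n).filter (fun j => j < i), X j i) ≤ (n : ℝ)) :
    ∑ i ∈ Finset.Icc 1 n, ∑ j ∈ Finset.Icc 1 n, X i j ≤
      4 * ((n : ℝ) ^ 2 * Real.sqrt n) := by
  have hsqrt : 0 < Real.sqrt n := Real.sqrt_pos.mpr (Nat.cast_pos.mpr hn)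
  calc ∑ i ∈ Icc 1 n, ∑ j ∈ Icc 1 n, X i j
      ≤ n * (Real.sqrt n * n) + n * (n * n) / Real.sqrt n :=
        sum_le_of_netOutflow_le n.cast_nonneg n.cast_nonneg hsqrt hzero hrange hbal
    _ = 2 * ((n : ℝ) ^ 2 * Real.sqrt n) := by
        field_simp
        rw [Real.sq_sqrt n.cast_nonneg]
        ring
    _ ≤ 4 * ((n : ℝ) ^ 2 * Real.sqrt n) := by
        gcongr
        norm_num
end
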